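/- In the good (value) setting, an allocation rule x admits a payment scheme p such that the mechanism (x,p) is truthful if and only if x satisfies the monotonicity property: x_i(a, s_{-i}) ≤ x_i(b, s_{-i}) for all agents i, all s_{-i} ∈ [k]^{n-1}, and all (a,b) ∈ σ_i(s_{-i}), i.e., whenever v_i(a, s_{-i}) < v_i(b, s_{-i}). -/

import Mathlib

/-!
Necessity is the usual swap argument: adding the two incentive constraints between reports `a` and
`b` gives `(x_b - x_a) (v_b - v_a) ≥ 0`. For sufficiency fix an agent and the others' signals, and
use Myerson's payments: with `X(z)` the largest allocation among the agent's own signals of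
value below `z`, the truthful utility is `U(t) = ∫₀ᵗ X`. Monotonicity makes `X` nondecreasing and
puts the allocation of a signal between `X` just below and just above its value, so that
allocation is a subgradient of the convex function `U` there; this is exactly incentive
compatibility, and `0 ≤ U(v_c) ≤ x_c v_c` gives individual rationality and nonnegative payments.
-/

open Finset MeasureTheory intervalIntegral Function

theorem Monotone.intervalIntegral_le_mul_sub {f : ℝ → ℝ} (hf : Monotone f) {t m : ℝ}
    (ht : f t ≤ m) (hm : ∀ z, t < z → m ≤ f z) (s : ℝ) :
    ∫ z in s..t, f z ≤ m * (t - s) := by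
  rcases le_or_gt s t with hst | hts
  · calc ∫ z in s..t, f z ≤ ∫ _ in s..t, m :=
          integral_mono_on hst hf.intervalIntegrable intervalIntegrable_const
            fun z hz => (hf hz.2).trans ht
      _ = m * (t - s) := by simp [mul_comm]
  · have hts' : m * (s - t) ≤ ∫ z in t..s, f z :=
      calc m * (s - t) = ∫ _ in t..s, m := by simp [mul_comm]
        _ ≤ ∫ z in t..s, f z :=
          integral_mono_on_of_le_Ioo hts.le intervalIntegrable_const hf.intervalIntegrable
            fun z hz => hm z hz.1
    rw [integral_symm]
    linarith

noncomputable section SingleAgent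

variable {C : Type*} (w y : C → ℝ)

/-- An agent with options `C`: option `c` is worth `w c` to the agent and allocated `y c`; the
payments `q` make truthful reporting optimal. -/
def IsIncentiveCompatible (q : C → ℝ) : Prop :=
  ∀ a b, y b * w a - q b ≤ y a * w a - q a

theorem IsIncentiveCompatible.le_of_lt {w y q : C → ℝ} (h : IsIncentiveCompatible w y q)
    {a b : C} (hab : w a < w b) : y a ≤ y b := by
  have hab' := h a b
  have hba := h b a
  nlinarith

variable [Fintype C]

/-- The largest allocation among options of value below `z`, or `0` if there is none. -/
def cumulativeAllocation (z : ℝ) : ℝ :=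
  (univ.filter (w · < z)).fold max 0 y

def myersonPayment (c : C) : ℝ :=
  y c * w c - ∫ z in 0..w c, cumulativeAllocation w y z

variable {w y}

theorem cumulativeAllocation_le_iff {z B : ℝ} :
    cumulativeAllocation w y z ≤ B ↔ 0 ≤ B ∧ ∀ c, w c < z → y c ≤ B := by
  simp [cumulativeAllocation, fold_max_le]

theorem cumulativeAllocation_nonneg (z : ℝ) : 0 ≤ cumulativeAllocation w y z :=
  (le_fold_max _).2 (Or.inl le_rfl)

theorem le_cumulativeAllocation {c : C} {z : ℝ} (hc : w c < z) :
    y c ≤ cumulativeAllocation w y z :=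
  (le_fold_max _).2 (Or.inr ⟨c, by simpa using hc, le_rfl⟩)

theorem monotone_cumulativeAllocation : Monotone (cumulativeAllocation w y) := fun _ _ hz =>
  cumulativeAllocation_le_iff.2 ⟨cumulativeAllocation_nonneg _, fun _ hc =>
    le_cumulativeAllocation (hc.trans_le hz)⟩

variable (hy0 : ∀ c, 0 ≤ y c) (hy : ∀ a b, w a < w b → y a ≤ y b)
include hy0 hy

theorem cumulativeAllocation_le {c : C} {z : ℝ} (hz : z ≤ w c) :
    cumulativeAllocation w y z ≤ y c :=
  cumulativeAllocation_le_iff.2 ⟨hy0 c, fun a ha => hy a c (ha.trans_le hz)⟩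

theorem intervalIntegral_cumulativeAllocation_le (c : C) (s : ℝ) :
    ∫ z in s..w c, cumulativeAllocation w y z ≤ y c * (w c - s) :=
  monotone_cumulativeAllocation.intervalIntegral_le_mul_sub (cumulativeAllocation_le hy0 hy le_rfl)
    (fun _ => le_cumulativeAllocation) s

theorem myersonPayment_nonneg (c : C) : 0 ≤ myersonPayment w y c := by
  have := intervalIntegral_cumulativeAllocation_le hy0 hy c 0
  rw [myersonPayment]
  linarith

theorem isIncentiveCompatible_myersonPayment : IsIncentiveCompatible w y (myersonPayment w y) := by
  intro a b
  have hsub := intervalIntegral_cumulativeAllocation_le hy0 hy b (w a)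
  have hint : ∀ t, IntervalIntegrable (cumulativeAllocation w y) volume 0 t := fun _ =>
    monotone_cumulativeAllocation.intervalIntegrable
  rw [← integral_interval_sub_left (hint _) (hint _)] at hsub
  simp only [myersonPayment]
  linarith

omit hy0 hy in
theorem utility_myersonPayment_nonneg {c : C} (hc : 0 ≤ w c) :
    0 ≤ y c * w c - myersonPayment w y c := by
  rw [myersonPayment, sub_sub_cancel]
  exact integral_nonneg hc fun z _ => cumulativeAllocation_nonneg z

end SingleAgent

theorem stmt1 (n k : ℕ)
    (v : Fin n → (Fin n → Fin k) → ℝ) (hv : ∀ i s, 0 < v i s)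
    (x : Fin n → (Fin n → Fin k) → ℝ)
    (hx01 : ∀ i s, 0 ≤ x i s ∧ x i s ≤ 1) :
    (∃ p : Fin n → (Fin n → Fin k) → ℝ,
      (∀ i s, 0 ≤ p i s) ∧
      (∀ (s : Fin n → Fin k) (i : Fin n) (b : Fin k),
        x i (Function.update s i b) * v i s - p i (Function.update s i b)
          ≤ x i s * v i s - p i s) ∧
      (∀ (s : Fin n → Fin k) (i : Fin n), 0 ≤ x i s * v i s - p i s)) ↔
    (∀ (i : Fin n) (s : Fin n → Fin k) (a b : Fin k),
      v i (Function.update s i a) < v i (Function.update s i b) →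
      x i (Function.update s i a) ≤ x i (Function.update s i b)) := by
  constructor
  · rintro ⟨p, -, hic, -⟩ i s a b hab
    refine IsIncentiveCompatible.le_of_lt (w := fun c => v i (update s i c))
      (y := fun c => x i (update s i c)) (q := fun c => p i (update s i c)) (fun a b => ?_) hab
    simpa using hic (update s i a) i b
  · intro hmono
    have hx0 i s c : 0 ≤ x i (update s i c) := (hx01 i _).1
    -- `update s i b` and `s` give the same functions of `c` (by `update_idem`), so every report of
    -- agent `i` is priced by the same single-agent payment rule.
    refine ⟨fun i s => myersonPayment (fun c => v i (update s i c)) (fun c => x i (update s i c))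
      (s i), fun i s => myersonPayment_nonneg (hx0 i s) (hmono i s) _, fun s i b => ?_,
      fun s i => ?_⟩
    · simpa using isIncentiveCompatible_myersonPayment (hx0 i s) (hmono i s) (s i) b
    · simpa using utility_myersonPayment_nonneg (w := fun c => v i (update s i c))
        (y := fun c => x i (update s i c)) (c := s i) (hv i _).le
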